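/- Let α ∈ (0,1), ρ ∈ (0,1), F₁, F₂ > 0, and define u(x₁, x₂) = -(4/π^{2+2α}) ∑_{n,m ≥ 1} (F₁+F₂)/((n²+m²)^α n m) · sin(π n ρ) sin(π m ρ) cos(π n x₁ + π m x₂). Then ‖u‖_∞ ≤ C(α)(F₁+F₂) ρ^{2α} for a constant C(α) depending only on α. -/

import Mathlib

/-!
Since `(n² + m²)^α ≥ (n m)^α`, `|sin x| ≤ min 1 |x|` and `|cos| ≤ 1`, the double series is
dominated termwise by `π² (F₁ + F₂) w(n) w(m)` with `w(n) = min 1 (n ρ) / n^(1 + α)`, so it is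
bounded by `π² (F₁ + F₂) (∑ w)²`. Splitting `∑ w` at `n ≈ 1/ρ`, the head is at most
`ρ ∑_{n ≤ 1/ρ} n^(-α) ≲ ρ^α / (1 - α)` and the tail at most `∑_{n > 1/ρ} n^(-1-α) ≲ ρ^α / α`;
both partial sums telescope against `n^(1-α)` and `n^(-α)` by the mean value theorem.
-/

open Real

theorem mul_rpow_sub_one_mul_sub_le_rpow_sub_rpow {p x y : ℝ} (hp₀ : 0 < p) (hp₁ : p ≤ 1)
    (hx : 0 ≤ x) (hxy : x ≤ y) : p * y ^ (p - 1) * (y - x) ≤ y ^ p - x ^ p := by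
  refine (convex_Icc x y).mul_sub_le_image_sub_of_le_deriv (f := fun t => t ^ p)
    (Real.continuous_rpow_const hp₀.le).continuousOn ?_ ?_ x (Set.left_mem_Icc.2 hxy) y
    (Set.right_mem_Icc.2 hxy) hxy <;> rw [interior_Icc]
  · exact fun t ht => (Real.hasDerivAt_rpow_const
      (Or.inl (hx.trans_lt ht.1).ne')).differentiableAt.differentiableWithinAt
  · rintro t ⟨hxt, hty⟩
    rw [Real.deriv_rpow_const]
    exact mul_le_mul_of_nonneg_left
      (rpow_le_rpow_of_nonpos (hx.trans_lt hxt) hty.le (by linarith)) hp₀.le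

theorem mul_rpow_neg_sub_one_mul_sub_le_rpow_neg_sub_rpow_neg {α x y : ℝ} (hα : 0 ≤ α)
    (hx : 0 < x) (hxy : x ≤ y) : α * y ^ (-α - 1) * (y - x) ≤ x ^ (-α) - y ^ (-α) := by
  have hmvt := (convex_Icc x y).image_sub_le_mul_sub_of_deriv_le (f := fun t => t ^ (-α))
    (continuousOn_id.rpow_const fun t ht => Or.inl (hx.trans_le ht.1).ne') ?_
    (C := -α * y ^ (-α - 1)) ?_ x (Set.left_mem_Icc.2 hxy) y (Set.right_mem_Icc.2 hxy) hxy
  · linarith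
  all_goals rw [interior_Icc]
  · exact fun t ht => (Real.hasDerivAt_rpow_const
      (Or.inl (hx.trans ht.1).ne')).differentiableAt.differentiableWithinAt
  · rintro t ⟨hxt, hty⟩
    rw [Real.deriv_rpow_const, neg_mul, neg_mul, neg_le_neg_iff]
    exact mul_le_mul_of_nonneg_left
      (rpow_le_rpow_of_nonpos (hx.trans hxt) hty.le (by linarith)) hα

theorem sum_range_rpow_neg_le {α : ℝ} (hα₀ : 0 ≤ α) (hα₁ : α < 1) (N : ℕ) :
    ∑ n ∈ Finset.range N, ((n : ℝ) + 1) ^ (-α) ≤ (N : ℝ) ^ (1 - α) / (1 - α) := by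
  have hα : 0 < 1 - α := by linarith
  rw [le_div_iff₀ hα]
  calc (∑ n ∈ Finset.range N, ((n : ℝ) + 1) ^ (-α)) * (1 - α)
      ≤ ∑ n ∈ Finset.range N, (((n + 1 : ℕ) : ℝ) ^ (1 - α) - (n : ℝ) ^ (1 - α)) := by
        rw [Finset.sum_mul]
        gcongr with n
        have := mul_rpow_sub_one_mul_sub_le_rpow_sub_rpow hα (by linarith) n.cast_nonneg
          (le_add_of_nonneg_right zero_le_one)
        rw [sub_sub_cancel_left, add_sub_cancel_left, mul_one] at this
        push_cast
        linarith
    _ = (N : ℝ) ^ (1 - α) := by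
        rw [Finset.sum_range_sub (fun n : ℕ => (n : ℝ) ^ (1 - α))]
        simp [zero_rpow hα.ne']

theorem sum_range_rpow_neg_one_add_le {α x : ℝ} (hα : 0 < α) (hx : 0 < x) (K : ℕ) :
    ∑ n ∈ Finset.range K, ((n : ℝ) + x + 1) ^ (-(1 + α)) ≤ x ^ (-α) / α := by
  set g : ℕ → ℝ := fun n => ((n : ℝ) + x) ^ (-α)
  rw [le_div_iff₀ hα]
  calc (∑ n ∈ Finset.range K, ((n : ℝ) + x + 1) ^ (-(1 + α))) * α
      ≤ ∑ n ∈ Finset.range K, (g n - g (n + 1)) := by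
        rw [Finset.sum_mul]
        gcongr with n
        have := mul_rpow_neg_sub_one_mul_sub_le_rpow_neg_sub_rpow_neg hα.le
          (by positivity : 0 < (n : ℝ) + x) (le_add_of_nonneg_right zero_le_one)
        rw [add_sub_cancel_left, mul_one, ← neg_add', add_comm α] at this
        simp only [g, Nat.cast_succ, add_right_comm _ (1 : ℝ) x]
        linarith
    _ = g 0 - g K := Finset.sum_range_sub' g K
    _ ≤ x ^ (-α) := by
        have : 0 ≤ g K := by positivity
        simp only [g, CharP.cast_eq_zero, zero_add] at this ⊢
        linarith

theorem abs_sin_pi_mul_le {t : ℝ} (ht : 0 ≤ t) : |sin (π * t)| ≤ π * min 1 t := by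
  rw [mul_min_of_nonneg _ _ pi_pos.le, mul_one]
  refine le_min ((abs_sin_le_one _).trans (by linarith [pi_gt_three])) ?_
  exact abs_sin_le_abs.trans (abs_of_nonneg (by positivity)).le

theorem inv_rpow_add_sq_mul_mul_le {α a b : ℝ} (hα : 0 ≤ α) (ha : 0 < a) (hb : 0 < b) :
    ((a ^ 2 + b ^ 2) ^ α * a * b)⁻¹ ≤ a ^ (-(1 + α)) * b ^ (-(1 + α)) := by
  calc ((a ^ 2 + b ^ 2) ^ α * a * b)⁻¹ ≤ ((a * b) ^ α * a * b)⁻¹ := by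
        gcongr
        nlinarith [sq_nonneg (a - b)]
    _ = a ^ (-(1 + α)) * b ^ (-(1 + α)) := by
        rw [rpow_neg ha.le, rpow_neg hb.le, rpow_add ha, rpow_add hb, rpow_one, rpow_one,
          mul_rpow ha.le hb.le]
        ring

theorem abs_tsum_le_mul_sq_tsum {ι : Type*} {f : ι × ι → ℝ} {w : ι → ℝ} {c : ℝ}
    (hw₀ : 0 ≤ w) (hw : Summable w) (hf : ∀ p, |f p| ≤ c * (w p.1 * w p.2)) :
    |∑' p, f p| ≤ c * (∑' i, w i) ^ 2 := by
  rw [sq]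
  exact tsum_of_norm_bounded ((hw.hasSum.mul hw.hasSum (hw.mul_of_nonneg hw hw₀ hw₀)).mul_left c)
    fun p => (Real.norm_eq_abs _).trans_le (hf p)

/-- Majorant of `|sin (π (n + 1) ρ)| / (n + 1) ^ (1 + α)`, up to a factor `π`. -/
noncomputable def cutoffWeight (α ρ : ℝ) (n : ℕ) : ℝ :=
  min 1 (((n : ℝ) + 1) * ρ) * ((n : ℝ) + 1) ^ (-(1 + α))

section cutoffWeight

variable {α ρ : ℝ}

theorem cutoffWeight_nonneg (hρ : 0 ≤ ρ) (n : ℕ) : 0 ≤ cutoffWeight α ρ n := by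
  unfold cutoffWeight; positivity

theorem cutoffWeight_le_rpow_neg (n : ℕ) : cutoffWeight α ρ n ≤ ((n : ℝ) + 1) ^ (-(1 + α)) :=
  mul_le_of_le_one_left (by positivity) (min_le_left _ _)

theorem cutoffWeight_le_mul_rpow_neg (n : ℕ) : cutoffWeight α ρ n ≤ ρ * ((n : ℝ) + 1) ^ (-α) :=
  calc cutoffWeight α ρ n ≤ ((n : ℝ) + 1) * ρ * ((n : ℝ) + 1) ^ (-(1 + α)) :=
        mul_le_mul_of_nonneg_right (min_le_right _ _) (by positivity)
    _ = ρ * ((n : ℝ) + 1) ^ (-α) := by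
        rw [show -α = 1 + -(1 + α) by ring, rpow_add (by positivity), rpow_one]
        ring

theorem summable_cutoffWeight (hα : 0 < α) (hρ : 0 ≤ ρ) : Summable (cutoffWeight α ρ) := by
  refine .of_nonneg_of_le (cutoffWeight_nonneg hρ) cutoffWeight_le_rpow_neg ?_
  exact_mod_cast (summable_nat_add_iff 1).2 (Real.summable_nat_rpow.2 (by linarith))

theorem sum_range_cutoffWeight_le (hα₀ : 0 ≤ α) (hα₁ : α < 1) (hρ : 0 < ρ) {N : ℕ}
    (hN : (N : ℝ) ≤ 2 / ρ) : ∑ n ∈ Finset.range N, cutoffWeight α ρ n ≤ 2 / (1 - α) * ρ ^ α := by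
  have h1α : 0 < 1 - α := by linarith
  calc ∑ n ∈ Finset.range N, cutoffWeight α ρ n
      ≤ ∑ n ∈ Finset.range N, ρ * ((n : ℝ) + 1) ^ (-α) :=
        Finset.sum_le_sum fun n _ => cutoffWeight_le_mul_rpow_neg n
    _ ≤ ρ * ((2 / ρ) ^ (1 - α) / (1 - α)) := by
        rw [← Finset.mul_sum]
        gcongr
        exact (sum_range_rpow_neg_le hα₀ hα₁ N).trans (by gcongr)
    _ = 2 ^ (1 - α) / (1 - α) * ρ ^ α := by
        rw [div_rpow zero_le_two hρ.le, show α = 1 - (1 - α) by ring, rpow_sub hρ, rpow_one]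
        field_simp
    _ ≤ 2 / (1 - α) * ρ ^ α := by
        gcongr
        exact rpow_le_self_of_one_le one_le_two (by linarith)

theorem tsum_cutoffWeight_nat_add_le (hα : 0 < α) (hρ : 0 < ρ) {N : ℕ} (hN : 1 / ρ ≤ N) :
    ∑' n, cutoffWeight α ρ (n + N) ≤ 1 / α * ρ ^ α := by
  refine Real.tsum_le_of_sum_range_le (fun n => cutoffWeight_nonneg hρ.le _) fun K => ?_
  calc ∑ n ∈ Finset.range K, cutoffWeight α ρ (n + N)
      ≤ ∑ n ∈ Finset.range K, ((n : ℝ) + N + 1) ^ (-(1 + α)) :=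
        Finset.sum_le_sum fun n _ => by
          simpa [add_right_comm] using cutoffWeight_le_rpow_neg (α := α) (ρ := ρ) (n + N)
    _ ≤ (N : ℝ) ^ (-α) / α :=
        sum_range_rpow_neg_one_add_le hα ((one_div_pos.2 hρ).trans_le hN) K
    _ ≤ (1 / ρ) ^ (-α) / α := div_le_div_of_nonneg_right
        (rpow_le_rpow_of_nonpos (one_div_pos.2 hρ) hN (neg_nonpos.2 hα.le)) hα.le
    _ = 1 / α * ρ ^ α := by rw [one_div ρ, inv_rpow hρ.le, rpow_neg hρ.le, inv_inv]; ring

theorem tsum_cutoffWeight_le (hα₀ : 0 < α) (hα₁ : α < 1) (hρ₀ : 0 < ρ) (hρ₁ : ρ ≤ 1) :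
    ∑' n, cutoffWeight α ρ n ≤ (2 / (1 - α) + 1 / α) * ρ ^ α := by
  obtain ⟨N, hN₁, hN₂⟩ : ∃ N : ℕ, 1 / ρ ≤ N ∧ (N : ℝ) ≤ 2 / ρ := by
    refine ⟨⌈1 / ρ⌉₊, Nat.le_ceil _, ?_⟩
    have := Nat.ceil_lt_add_one (one_div_pos.2 hρ₀).le
    have := one_le_one_div hρ₀ hρ₁
    linarith [show 2 / ρ = 1 / ρ + 1 / ρ by ring]
  rw [← (summable_cutoffWeight hα₀ hρ₀.le).sum_add_tsum_nat_add N, add_mul]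
  exact add_le_add (sum_range_cutoffWeight_le hα₀.le hα₁ hρ₀ hN₂)
    (tsum_cutoffWeight_nat_add_le hα₀ hρ₀ hN₁)

theorem abs_coeff_mul_sin_mul_sin_mul_cos_le {F : ℝ} (hα : 0 ≤ α) (hρ : 0 ≤ ρ) (hF : 0 ≤ F)
    (n m : ℕ) (θ : ℝ) :
    |F / ((((n : ℝ) + 1) ^ 2 + ((m : ℝ) + 1) ^ 2) ^ α * (n + 1) * (m + 1)) *
        sin (π * (n + 1) * ρ) * sin (π * (m + 1) * ρ) * cos θ|
      ≤ F * π ^ 2 * (cutoffWeight α ρ n * cutoffWeight α ρ m) := by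
  have hsin (k : ℕ) : |sin (π * (k + 1) * ρ)| ≤ π * min 1 (((k : ℝ) + 1) * ρ) := by
    rw [mul_assoc]
    exact abs_sin_pi_mul_le (by positivity)
  rw [abs_mul, abs_mul, abs_mul, abs_div, abs_of_nonneg hF, abs_of_pos (by positivity),
    div_eq_mul_inv]
  calc F * ((((n : ℝ) + 1) ^ 2 + ((m : ℝ) + 1) ^ 2) ^ α * (n + 1) * (m + 1))⁻¹ *
        |sin (π * (n + 1) * ρ)| * |sin (π * (m + 1) * ρ)| * |cos θ|
      ≤ F * (((n : ℝ) + 1) ^ (-(1 + α)) * ((m : ℝ) + 1) ^ (-(1 + α))) *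
        (π * min 1 (((n : ℝ) + 1) * ρ)) * (π * min 1 (((m : ℝ) + 1) * ρ)) * 1 := by
        gcongr
        exacts [inv_rpow_add_sq_mul_mul_le hα (by positivity) (by positivity), hsin n, hsin m,
          abs_cos_le_one θ]
    _ = F * π ^ 2 * (cutoffWeight α ρ n * cutoffWeight α ρ m) := by
        unfold cutoffWeight
        ring

end cutoffWeight

theorem stmt_2 (α : ℝ) (hα : 0 < α) (hα1 : α < 1) :
    ∃ C : ℝ, 0 < C ∧ ∀ ρ F₁ F₂ : ℝ, 0 < ρ → ρ < 1 → 0 < F₁ → 0 < F₂ →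
      ∀ x₁ x₂ : ℝ,
        |(-(4 / π ^ (2 + 2 * α))) *
            ∑' p : ℕ × ℕ,
              (F₁ + F₂) / ((((p.1 + 1 : ℝ) ^ 2 + (p.2 + 1 : ℝ) ^ 2) ^ α) * (p.1 + 1) * (p.2 + 1)) *
                Real.sin (π * (p.1 + 1) * ρ) * Real.sin (π * (p.2 + 1) * ρ) *
                Real.cos (π * (p.1 + 1) * x₁ + π * (p.2 + 1) * x₂)|
          ≤ C * (F₁ + F₂) * ρ ^ (2 * α) := by
  set K := 2 / (1 - α) + 1 / α
  have hK : 0 < K := by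
    have : 0 < 1 - α := by linarith
    positivity
  refine ⟨4 / π ^ (2 + 2 * α) * π ^ 2 * K ^ 2, by positivity, ?_⟩
  intro ρ F₁ F₂ hρ hρ1 hF₁ hF₂ x₁ x₂
  have hF : 0 ≤ F₁ + F₂ := by positivity
  have hw : ∑' n, cutoffWeight α ρ n ≤ K * ρ ^ α := tsum_cutoffWeight_le hα hα1 hρ hρ1.le
  rw [abs_mul, abs_neg, abs_of_pos (by positivity)]
  calc 4 / π ^ (2 + 2 * α) * |_|
      ≤ 4 / π ^ (2 + 2 * α) * ((F₁ + F₂) * π ^ 2 * (K * ρ ^ α) ^ 2) := by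
        gcongr
        refine (abs_tsum_le_mul_sq_tsum (cutoffWeight_nonneg hρ.le)
          (summable_cutoffWeight hα hρ.le)
          fun p => abs_coeff_mul_sin_mul_sin_mul_cos_le hα.le hρ.le hF p.1 p.2 _).trans ?_
        gcongr
        exact tsum_nonneg (cutoffWeight_nonneg hρ.le)
    _ = 4 / π ^ (2 + 2 * α) * π ^ 2 * K ^ 2 * (F₁ + F₂) * ρ ^ (2 * α) := by
        rw [mul_comm 2 α, rpow_mul hρ.le, rpow_two]
        ring
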